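/- Almost surely, the random bipartite graph G(n,n,p) (with fixed p ∈ (0,1)) has a perfect matching for all but finitely many n. -/

import Mathlib

/-!
By Hall's theorem, `G(n,n,p)` has no perfect matching only if some `k` left vertices have all
their neighbours among some `k - 1` right vertices, i.e. there are no edges between a `k`-set
and an `(n + 1 - k)`-set. With `q = 1 - p = s²`, the union bound gives probability
at most `∑ₖ C(n,k) C(n,k-1) q^(k(n+1-k)) ≤ n³ sⁿ` once `n² sⁿ ≤ 1`. This is summable in `n`,
so Borel–Cantelli applies.
-/

open Finset MeasureTheory ProbabilityTheory Filter
open scoped Classical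

/-- The realized random bipartite graph on `Fin n ⊕ Fin n` built from the infinite array of
edge events `E i j`, `i j : ℕ`: left vertex `i` is adjacent to right vertex `j`
iff `ω ∈ E i j`. -/
def biGraphN {Ω : Type*} (E : ℕ → ℕ → Set Ω) (n : ℕ) (ω : Ω) :
    SimpleGraph (Fin n ⊕ Fin n) :=
  SimpleGraph.fromRel
    (fun u v => ∃ i j : Fin n, u = Sum.inl i ∧ v = Sum.inr j ∧ ω ∈ E (i : ℕ) (j : ℕ))

open scoped ENNReal

lemma Nat.choose_le_pow_min (n k : ℕ) : n.choose k ≤ n ^ min k (n - k) := by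
  rcases le_or_gt k n with hkn | hkn
  · rcases le_total k (n - k) with h | h
    · rw [min_eq_left h]
      exact n.choose_le_pow k
    · rw [min_eq_right h, ← Nat.choose_symm hkn]
      exact n.choose_le_pow _
  · simp [Nat.choose_eq_zero_of_lt hkn]

/-- With `m = min k (n + 1 - k)`, both binomials are at most `n ^ m` and
`k (n + 1 - k) ≥ m n / 2`, so the left side is at most `(n² sⁿ) ^ m`. -/
lemma choose_mul_choose_mul_pow_le {s : ℝ} (hs0 : 0 ≤ s) (hs1 : s ≤ 1) {n k : ℕ}
    (hk : k ∈ Icc 1 n) (hx : (n : ℝ) ^ 2 * s ^ n ≤ 1) :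
    (n.choose k * n.choose (k - 1) : ℝ) * (s ^ 2) ^ (k * (n + 1 - k)) ≤ n ^ 2 * s ^ n := by
  obtain ⟨hk1, hkn⟩ := mem_Icc.1 hk
  set m := min k (n + 1 - k)
  have hm : 1 ≤ m := by omega
  have hchoose_le {j : ℕ} (hj : min j (n - j) ≤ m) : n.choose j ≤ n ^ m :=
    (n.choose_le_pow_min j).trans (Nat.pow_le_pow_right (by omega) hj)
  have hchoose : n.choose k * n.choose (k - 1) ≤ n ^ (2 * m) := by
    rw [two_mul, pow_add]
    exact Nat.mul_le_mul (hchoose_le (by omega)) (hchoose_le (by omega))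
  have hexp : m * n ≤ 2 * (k * (n + 1 - k)) := by
    rcases le_total k (n + 1 - k) with h | h
    · calc m * n ≤ k * (2 * (n + 1 - k)) := Nat.mul_le_mul (by omega) (by omega)
        _ = 2 * (k * (n + 1 - k)) := by ring
    · calc m * n ≤ (n + 1 - k) * (2 * k) := Nat.mul_le_mul (by omega) (by omega)
        _ = 2 * (k * (n + 1 - k)) := by ring
  calc (n.choose k * n.choose (k - 1) : ℝ) * (s ^ 2) ^ (k * (n + 1 - k))
      ≤ (n : ℝ) ^ (2 * m) * s ^ (m * n) := by
        rw [← pow_mul]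
        exact mul_le_mul (by exact_mod_cast hchoose) (pow_le_pow_of_le_one hs0 hs1 hexp)
          (by positivity) (by positivity)
    _ = ((n : ℝ) ^ 2 * s ^ n) ^ m := by rw [mul_pow, pow_mul, pow_mul']
    _ ≤ (n : ℝ) ^ 2 * s ^ n := pow_le_of_le_one (by positivity) hx (by omega)

lemma ProbabilityTheory.iIndepSet.measure_biInter_compl {Ω ι : Type*} [MeasurableSpace Ω]
    {μ : Measure Ω} {s : ι → Set Ω} (h : iIndepSet s μ) (F : Finset ι) :
    μ (⋂ i ∈ F, (s i)ᶜ) = ∏ i ∈ F, μ (s i)ᶜ :=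
  (iIndepSet_iff s μ).1 h F fun _ _ =>
    (MeasurableSpace.measurableSet_generateFrom (Set.mem_singleton _)).compl

lemma SimpleGraph.exists_isPerfectMatching_of_equiv {α β : Type*} {G : SimpleGraph (α ⊕ β)}
    (f : α ≃ β) (hadj : ∀ a, G.Adj (.inl a) (.inr (f a))) :
    ∃ M : G.Subgraph, M.IsPerfectMatching := by
  let eL := Equiv.ofInjective (Sum.inl : α → α ⊕ β) Sum.inl_injective
  let eR := Equiv.ofInjective (Sum.inr : β → α ⊕ β) Sum.inr_injective
  obtain ⟨M, hverts, hM⟩ := Subgraph.IsMatching.exists_of_disjoint_sets_of_equiv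
    Set.isCompl_range_inl_range_inr.disjoint (eL.symm.trans (f.trans eR)) fun v => by
      obtain ⟨_, a, rfl⟩ := v
      simpa [eL, eR] using hadj a
  exact ⟨M, hM, Subgraph.isSpanning_iff.2 (hverts.trans Set.range_inl_union_range_inr)⟩

section RandomBipartiteGraph

variable {Ω : Type*} {E : ℕ → ℕ → Set Ω}

def noEdgesBetween (E : ℕ → ℕ → Set Ω) {n : ℕ} (S T : Finset (Fin n)) : Set Ω :=
  ⋂ e ∈ S ×ˢ T, (E e.1 e.2)ᶜ

/-- By Hall's theorem, `biGraphN E n ω` has a perfect matching unless `ω` lies in this event. -/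
def hallObstruction (E : ℕ → ℕ → Set Ω) (n : ℕ) : Set Ω :=
  ⋃ k ∈ Icc 1 n, ⋃ S ∈ powersetCard k (univ : Finset (Fin n)),
    ⋃ T ∈ powersetCard (k - 1) (univ : Finset (Fin n)), noEdgesBetween E S Tᶜ

lemma biGraphN_adj_inl_inr {n : ℕ} {ω : Ω} {i j : Fin n} :
    (biGraphN E n ω).Adj (.inl i) (.inr j) ↔ ω ∈ E i j := by
  simp [biGraphN]

lemma exists_isPerfectMatching_of_notMem_hallObstruction {n : ℕ} {ω : Ω}
    (hω : ω ∉ hallObstruction E n) :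
    ∃ M : (biGraphN E n ω).Subgraph, M.IsPerfectMatching := by
  let nbrs : Fin n → Finset (Fin n) := fun i => {j | ω ∈ E i j}
  have hall : ∀ S : Finset (Fin n), #S ≤ #(S.biUnion nbrs) := by
    intro S
    by_contra! hlt
    obtain ⟨T, hST, hT⟩ := exists_superset_card_eq (show #(S.biUnion nbrs) ≤ #S - 1 by omega)
      (by simpa using (card_le_univ S).trans' (Nat.sub_le _ _))
    have hS : #S ∈ Icc 1 n := mem_Icc.2 ⟨by omega, by simpa using card_le_univ S⟩
    refine hω (Set.mem_biUnion hS (Set.mem_biUnion (mem_powersetCard.2 ⟨subset_univ S, rfl⟩)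
      (Set.mem_biUnion (mem_powersetCard.2 ⟨subset_univ T, hT⟩) ?_)))
    simp only [noEdgesBetween, Set.mem_iInter, mem_product, mem_compl, Set.mem_compl_iff]
    rintro ⟨i, j⟩ ⟨hi, hj⟩ hE
    exact hj (hST (mem_biUnion.2 ⟨i, hi, by simpa [nbrs] using hE⟩))
  obtain ⟨f, hf_inj, hf⟩ := (all_card_le_biUnion_card_iff_exists_injective nbrs).1 hall
  refine SimpleGraph.exists_isPerfectMatching_of_equiv
    (Equiv.ofBijective f (Finite.injective_iff_bijective.1 hf_inj)) fun i => ?_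
  simpa [biGraphN_adj_inl_inr, nbrs] using hf i

variable [MeasurableSpace Ω] {μ : Measure Ω}

lemma measure_noEdgesBetween {q : ℝ} (hindep : iIndepSet (fun e : ℕ × ℕ => E e.1 e.2) μ)
    (hcompl : ∀ i j, μ (E i j)ᶜ = ENNReal.ofReal q) {n : ℕ} (S T : Finset (Fin n)) :
    μ (noEdgesBetween E S T) = ENNReal.ofReal q ^ (#S * #T) := by
  have hinj : Function.Injective (Prod.map (Fin.val : Fin n → ℕ) (Fin.val : Fin n → ℕ)) :=
    Fin.val_injective.prodMap Fin.val_injective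
  simpa only [noEdgesBetween, Function.comp_apply, Prod.map_fst, Prod.map_snd, hcompl, prod_const,
    card_product] using (hindep.precomp hinj).measure_biInter_compl (S ×ˢ T)

lemma measure_hallObstruction_le_sum {q : ℝ} (hq : 0 ≤ q)
    (hindep : iIndepSet (fun e : ℕ × ℕ => E e.1 e.2) μ)
    (hcompl : ∀ i j, μ (E i j)ᶜ = ENNReal.ofReal q) (n : ℕ) :
    μ (hallObstruction E n) ≤
      ENNReal.ofReal
        (∑ k ∈ Icc 1 n, (n.choose k * n.choose (k - 1) : ℝ) * q ^ (k * (n + 1 - k))) := by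
  calc μ (hallObstruction E n)
      ≤ ∑ k ∈ Icc 1 n, ∑ S ∈ powersetCard k (univ : Finset (Fin n)),
          ∑ T ∈ powersetCard (k - 1) (univ : Finset (Fin n)), μ (noEdgesBetween E S Tᶜ) := by
        refine (measure_biUnion_finset_le _ _).trans (sum_le_sum fun k _ => ?_)
        exact (measure_biUnion_finset_le _ _).trans
          (sum_le_sum fun S _ => measure_biUnion_finset_le _ _)
    _ = ∑ k ∈ Icc 1 n, ∑ S ∈ powersetCard k (univ : Finset (Fin n)),
          ∑ T ∈ powersetCard (k - 1) (univ : Finset (Fin n)),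
            ENNReal.ofReal (q ^ (k * (n + 1 - k))) := by
        refine sum_congr rfl fun k hk => sum_congr rfl fun S hS => sum_congr rfl fun T hT => ?_
        have hk1 := (mem_Icc.1 hk).1
        rw [measure_noEdgesBetween hindep hcompl, card_compl, Fintype.card_fin,
          (mem_powersetCard.1 hS).2, (mem_powersetCard.1 hT).2, ENNReal.ofReal_pow hq,
          show n - (k - 1) = n + 1 - k by omega]
    _ = _ := by
        rw [ENNReal.ofReal_sum_of_nonneg fun k _ => by positivity]
        refine sum_congr rfl fun k _ => ?_
        simp only [sum_const, card_powersetCard, card_univ, Fintype.card_fin, nsmul_eq_mul]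
        rw [ENNReal.ofReal_mul (by positivity), ENNReal.ofReal_mul (by positivity),
          ENNReal.ofReal_natCast, ENNReal.ofReal_natCast]
        ring

variable [IsProbabilityMeasure μ]

lemma measure_hallObstruction_le {s : ℝ} (hs0 : 0 ≤ s) (hs1 : s ≤ 1)
    (hindep : iIndepSet (fun e : ℕ × ℕ => E e.1 e.2) μ)
    (hcompl : ∀ i j, μ (E i j)ᶜ = ENNReal.ofReal (s ^ 2)) (n : ℕ) :
    μ (hallObstruction E n) ≤ ENNReal.ofReal (n ^ 3 * s ^ n) := by
  by_cases hx : (n : ℝ) ^ 2 * s ^ n ≤ 1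
  · refine (measure_hallObstruction_le_sum (by positivity) hindep hcompl n).trans
      (ENNReal.ofReal_le_ofReal ?_)
    calc ∑ k ∈ Icc 1 n, (n.choose k * n.choose (k - 1) : ℝ) * (s ^ 2) ^ (k * (n + 1 - k))
        ≤ ∑ _k ∈ Icc 1 n, (n : ℝ) ^ 2 * s ^ n :=
          sum_le_sum fun k hk => choose_mul_choose_mul_pow_le hs0 hs1 hk hx
      _ = n ^ 3 * s ^ n := by
          rw [sum_const, Nat.card_Icc, nsmul_eq_mul, Nat.add_sub_cancel]
          ring
  · rw [not_le] at hx
    have hn : (1 : ℝ) ≤ n := by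
      rcases Nat.eq_zero_or_pos n with rfl | hn
      · norm_num at hx
      · exact_mod_cast hn
    have h1 : 1 ≤ (n : ℝ) ^ 3 * s ^ n :=
      calc 1 ≤ (n : ℝ) ^ 2 * s ^ n := hx.le
        _ ≤ n * (n ^ 2 * s ^ n) := le_mul_of_one_le_left (by positivity) hn
        _ = n ^ 3 * s ^ n := by ring
    exact prob_le_one.trans (ENNReal.one_le_ofReal.2 h1)

end RandomBipartiteGraph

/-- almost surely, the random bipartite graph `G(n,n,p)` (fixed `p ∈ (0,1)`,
built consistently from an i.i.d. array of edge events) has a perfect matching for all but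
finitely many `n`. -/
theorem eventually_perfect_matching
    {Ω : Type*} [MeasurableSpace Ω] (μ : Measure Ω) [IsProbabilityMeasure μ]
    (p : ℝ) (hp0 : 0 < p) (hp1 : p < 1)
    (E : ℕ → ℕ → Set Ω)
    (hEmeas : ∀ i j, MeasurableSet (E i j))
    (hindep : iIndepSet (fun q : ℕ × ℕ => E q.1 q.2) μ)
    (hprob : ∀ i j, μ (E i j) = ENNReal.ofReal p) :
    ∀ᵐ ω ∂μ, ∀ᶠ n : ℕ in atTop,
      ∃ M : (biGraphN E n ω).Subgraph, M.IsPerfectMatching := by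
  set s := √(1 - p)
  have hs0 : 0 ≤ s := Real.sqrt_nonneg _
  have hs1 : s < 1 := (Real.sqrt_lt' one_pos).2 (by rw [one_pow]; linarith)
  have hcompl : ∀ i j, μ (E i j)ᶜ = ENNReal.ofReal (s ^ 2) := fun i j => by
    rw [Real.sq_sqrt (by linarith), prob_compl_eq_one_sub (hEmeas i j), hprob,
      ENNReal.ofReal_sub _ hp0.le, ENNReal.ofReal_one]
  have hsum : ∑' n, μ (hallObstruction E n) ≠ ∞ := by
    refine ne_top_of_le_ne_top ?_
      (ENNReal.tsum_le_tsum (measure_hallObstruction_le hs0 hs1.le hindep hcompl))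
    rw [← ENNReal.ofReal_tsum_of_nonneg (fun n => by positivity)
      (summable_pow_mul_geometric_of_norm_lt_one 3 (by rwa [Real.norm_of_nonneg hs0]))]
    exact ENNReal.ofReal_ne_top
  filter_upwards [ae_eventually_notMem hsum] with ω hω
  exact hω.mono fun n => exists_isPerfectMatching_of_notMem_hallObstruction
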